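/- arXiv:2207.10891 — 5 statements merged into one kernel-verified Lean document; each statement's English description precedes it below -/
import Mathlib

section
/- Let A be an m×m Hermitian complex matrix and B an m×n complex matrix such that A − B B^H is positive definite. For every m×n complex matrix V such that the matrix Σ := V^H A V − (V^H B)(V^H B)^H is positive definite, one has det(I_n + (V^H B)^H Σ^{−1} (V^H B)) ≤ det(I_n + B^H (A − B B^H)^{−1} B) (both determinants are real and ≥ 1). (This is the inequality part of Corollary 2: no receive combining matrix V can yield a larger value of the spectral-efficiency determinant than the value attained by MMSE combining.) -/
/-!
With `M := A - B Bᴴ` one has `Σ = Vᴴ M V`. The block matrix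
`[[Vᴴ M V, Vᴴ B], [Bᴴ V, Bᴴ M⁻¹ B]]` is the Gram matrix `Wᴴ M W` of the columns of
`W = [V, M⁻¹ B]`, hence positive semidefinite, and its Schur complement gives the Loewner
inequality `(Vᴴ B)ᴴ Σ⁻¹ (Vᴴ B) ≤ Bᴴ M⁻¹ B`. The determinant is monotone in the Loewner order on
positive definite matrices: writing `X = S²`, `det (X + D) = det X · det (1 + S⁻¹ D S⁻¹)` and the
last factor is a product of eigenvalues `≥ 1`.
-/

open Matrix
open scoped ComplexOrder MatrixOrder

namespace Matrix

variable {𝕜 : Type*} [RCLike 𝕜] {n : Type*} [Fintype n] [DecidableEq n]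

lemma PosSemidef.one_le_det_one_add {P : Matrix n n 𝕜} (hP : P.PosSemidef) :
    1 ≤ (1 + P).det := by
  have hH : (1 + P).IsHermitian := isHermitian_one.add hP.isHermitian
  have one_le_eigenvalues (i : n) : 1 ≤ hH.eigenvalues i := by
    set v := hH.eigenvectorBasis i
    have hv : RCLike.re (star ⇑v ⬝ᵥ ⇑v) = 1 := by
      rw [dotProduct_comm, ← EuclideanSpace.inner_eq_star_dotProduct, inner_self_eq_norm_sq,
        hH.eigenvectorBasis.orthonormal.1 i, one_pow]
    rw [hH.eigenvalues_eq i, add_mulVec, one_mulVec, dotProduct_add, map_add, hv]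
    exact le_add_of_nonneg_right (hP.re_dotProduct_nonneg _)
  rw [hH.det_eq_prod_eigenvalues, ← RCLike.ofReal_prod, ← RCLike.ofReal_one,
    RCLike.ofReal_le_ofReal]
  exact Finset.one_le_prod fun i _ => one_le_eigenvalues i

lemma PosDef.det_le_det_of_le {X Y : Matrix n n 𝕜} (hX : X.PosDef) (hXY : X ≤ Y) :
    X.det ≤ Y.det := by
  set S := CFC.sqrt X
  have hS : S * S = X := CFC.sqrt_mul_sqrt_self X hX.posSemidef.nonneg
  have hSH : Sᴴ = S := (CFC.sqrt_nonneg X).posSemidef.isHermitian.eq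
  have hdetS : IsUnit S.det := by
    refine isUnit_iff_ne_zero.mpr fun h => hX.det_pos.ne' ?_
    rw [← hS, det_mul, h, mul_zero]
  have hP : (S⁻¹ * (Y - X) * S⁻¹).PosSemidef := by
    simpa [conjTranspose_nonsing_inv, hSH] using hXY.conjTranspose_mul_mul_same S⁻¹
  have hY : S * (1 + S⁻¹ * (Y - X) * S⁻¹) * S = Y := by
    rw [mul_add, add_mul, mul_one, hS, ← Matrix.mul_assoc, ← Matrix.mul_assoc,
      mul_nonsing_inv S hdetS, one_mul, Matrix.mul_assoc, nonsing_inv_mul S hdetS, mul_one,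
      add_sub_cancel]
  calc X.det = (S * S).det * 1 := by rw [hS, mul_one]
    _ ≤ (S * S).det * (1 + S⁻¹ * (Y - X) * S⁻¹).det :=
      mul_le_mul_of_nonneg_left hP.one_le_det_one_add (hS ▸ hX.det_pos.le)
    _ = (S * (1 + S⁻¹ * (Y - X) * S⁻¹) * S).det := by simp only [det_mul]; ring
    _ = Y.det := by rw [hY]

variable {m k : Type*} [Fintype m] [DecidableEq m] [Fintype k]

lemma conjTranspose_mul_inv_mul_le {M : Matrix m m 𝕜} (hM : M.PosDef) {V : Matrix m n 𝕜}
    (hV : (Vᴴ * M * V).PosDef) (B : Matrix m k 𝕜) :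
    (Vᴴ * B)ᴴ * (Vᴴ * M * V)⁻¹ * (Vᴴ * B) ≤ Bᴴ * M⁻¹ * B := by
  have : Invertible (Vᴴ * M * V) := hV.isUnit.invertible
  have : Invertible M := hM.isUnit.invertible
  have hblocks : fromBlocks (Vᴴ * M * V) (Vᴴ * B) (Vᴴ * B)ᴴ (Bᴴ * M⁻¹ * B) =
      (fromCols V (M⁻¹ * B))ᴴ * M * fromCols V (M⁻¹ * B) := by
    rw [conjTranspose_fromCols_eq_fromRows_conjTranspose, fromRows_mul, fromRows_mul_fromCols]
    simp [conjTranspose_mul, conjTranspose_nonsing_inv, hM.isHermitian.eq, Matrix.mul_assoc]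
  have hpsd := hblocks ▸ hM.posSemidef.conjTranspose_mul_mul_same (fromCols V (M⁻¹ * B))
  exact (hV.fromBlocks₁₁ (Vᴴ * B) (Bᴴ * M⁻¹ * B)).mp hpsd

end Matrix

theorem stmt0_general {m n : ℕ} (A : Matrix (Fin m) (Fin m) ℂ) (B : Matrix (Fin m) (Fin n) ℂ)
    (hM : (A - B * Bᴴ).PosDef)
    (V : Matrix (Fin m) (Fin n) ℂ)
    (hSig : (Vᴴ * A * V - (Vᴴ * B) * (Vᴴ * B)ᴴ).PosDef) :
    1 ≤ (1 + (Vᴴ * B)ᴴ * (Vᴴ * A * V - (Vᴴ * B) * (Vᴴ * B)ᴴ)⁻¹ * (Vᴴ * B)).det ∧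
    1 ≤ (1 + Bᴴ * (A - B * Bᴴ)⁻¹ * B).det ∧
    (1 + (Vᴴ * B)ᴴ * (Vᴴ * A * V - (Vᴴ * B) * (Vᴴ * B)ᴴ)⁻¹ * (Vᴴ * B)).det ≤
      (1 + Bᴴ * (A - B * Bᴴ)⁻¹ * B).det := by
  have hsigma : Vᴴ * A * V - (Vᴴ * B) * (Vᴴ * B)ᴴ = Vᴴ * (A - B * Bᴴ) * V := by
    simp only [conjTranspose_mul, conjTranspose_conjTranspose, Matrix.mul_sub, Matrix.sub_mul,
      Matrix.mul_assoc]
  rw [hsigma] at hSig ⊢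
  have hcombined : ((Vᴴ * B)ᴴ * (Vᴴ * (A - B * Bᴴ) * V)⁻¹ * (Vᴴ * B)).PosSemidef :=
    hSig.posSemidef.inv.conjTranspose_mul_mul_same (Vᴴ * B)
  have hmmse : (Bᴴ * (A - B * Bᴴ)⁻¹ * B).PosSemidef :=
    hM.posSemidef.inv.conjTranspose_mul_mul_same B
  exact ⟨hcombined.one_le_det_one_add, hmmse.one_le_det_one_add,
    (PosDef.one.add_posSemidef hcombined).det_le_det_of_le
      (add_le_add_right (conjTranspose_mul_inv_mul_le hM hSig B) 1)⟩

/-- Inequality part of Corollary 2: no receive combining matrix `V` yields a larger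
spectral-efficiency determinant than the value attained by MMSE combining. -/
theorem stmt0 {m n : ℕ} (A : Matrix (Fin m) (Fin m) ℂ) (B : Matrix (Fin m) (Fin n) ℂ)
    (hA : A.IsHermitian) (hM : (A - B * Bᴴ).PosDef)
    (V : Matrix (Fin m) (Fin n) ℂ)
    (hSig : (Vᴴ * A * V - (Vᴴ * B) * (Vᴴ * B)ᴴ).PosDef) :
    1 ≤ (1 + (Vᴴ * B)ᴴ * (Vᴴ * A * V - (Vᴴ * B) * (Vᴴ * B)ᴴ)⁻¹ * (Vᴴ * B)).det ∧
    1 ≤ (1 + Bᴴ * (A - B * Bᴴ)⁻¹ * B).det ∧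
    (1 + (Vᴴ * B)ᴴ * (Vᴴ * A * V - (Vᴴ * B) * (Vᴴ * B)ᴴ)⁻¹ * (Vᴴ * B)).det ≤
      (1 + Bᴴ * (A - B * Bᴴ)⁻¹ * B).det :=
  stmt0_general A B hM V hSig
end

section
/- Let A be an m×m Hermitian positive definite complex matrix and B an m×n complex matrix of full column rank (i.e., B is injective as a linear map) such that A − B B^H is positive definite. Set V := A^{−1} B, D := V^H B, and Σ := V^H A V − D D^H. Then Σ is positive definite and D^H Σ^{−1} D = B^H (A − B B^H)^{−1} B; in particular the MMSE combining matrix V = A^{−1} B attains the maximum value det(I_n + B^H (A − B B^H)^{−1} B) of the determinant det(I_n + D^H Σ^{−1} D). (This is the attainment part of Corollary 2.) -/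
/-!
With `M = A - B Bᴴ` we have `Σ = Vᴴ M V` for every `V`, so `Σ ≻ 0` as soon as `V` is injective.
For `V = A⁻¹ B` both `D` and `Vᴴ A V` equal `Bᴴ A⁻¹ B`, so `Σ = D - D²`. Writing `X = Bᴴ M⁻¹ B`,
the push-through identity `A⁻¹ (M + B Bᴴ) M⁻¹ = M⁻¹` gives `D (1 + X) = X = (1 + X) D`,
from which `Σ⁻¹ = (1 + X) X⁻¹ (1 + X)` and `D Σ⁻¹ D = X`.
-/

open Matrix
open scoped ComplexOrder

namespace Matrix

variable {n p R : Type*} [Fintype n] [DecidableEq n] [Fintype p] [DecidableEq p] [CommRing R]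

theorem mul_inv_mul_mul_one_add_mul_inv_mul {A M : Matrix n n R} (B : Matrix n p R)
    (C : Matrix p n R) (hA : IsUnit A.det) (hM : IsUnit M.det) (hAM : A = M + B * C) :
    C * A⁻¹ * B * (1 + C * M⁻¹ * B) = C * M⁻¹ * B := by
  calc C * A⁻¹ * B * (1 + C * M⁻¹ * B)
      = C * A⁻¹ * ((M + B * C) * (M⁻¹ * B)) := by
        simp only [Matrix.mul_add, Matrix.add_mul, Matrix.mul_one, Matrix.mul_assoc,
          mul_nonsing_inv_cancel_left _ _ hM]
    _ = C * M⁻¹ * B := by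
        rw [← hAM, Matrix.mul_assoc C, nonsing_inv_mul_cancel_left _ _ hA, Matrix.mul_assoc]

theorem one_add_mul_inv_mul_mul_mul_inv_mul {A M : Matrix n n R} (B : Matrix n p R)
    (C : Matrix p n R) (hA : IsUnit A.det) (hM : IsUnit M.det) (hAM : A = M + B * C) :
    (1 + C * M⁻¹ * B) * (C * A⁻¹ * B) = C * M⁻¹ * B := by
  calc (1 + C * M⁻¹ * B) * (C * A⁻¹ * B)
      = C * M⁻¹ * ((M + B * C) * A⁻¹) * B := by
        simp only [Matrix.mul_add, Matrix.add_mul, Matrix.one_mul, Matrix.mul_assoc,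
          nonsing_inv_mul_cancel_left _ _ hM]
    _ = C * M⁻¹ * B := by
        rw [← hAM, mul_nonsing_inv _ hA, Matrix.mul_one]

theorem mul_inv_sub_mul_self_mul {D X : Matrix n n R} (hX : IsUnit X.det)
    (hDX : D * (1 + X) = X) (hXD : (1 + X) * D = X) :
    D * (D - D * D)⁻¹ * D = X := by
  have hinv : (D - D * D)⁻¹ = (1 + X) * X⁻¹ * (1 + X) := by
    apply inv_eq_right_inv
    calc (D - D * D) * ((1 + X) * X⁻¹ * (1 + X))
        = (1 - D) * (D * (1 + X)) * X⁻¹ * (1 + X) := by noncomm_ring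
      _ = 1 := by
        rw [hDX, Matrix.mul_assoc (1 - D), mul_nonsing_inv _ hX, Matrix.mul_one, Matrix.sub_mul,
          Matrix.one_mul, hDX, add_sub_cancel_right]
  calc D * (D - D * D)⁻¹ * D = D * (1 + X) * X⁻¹ * ((1 + X) * D) := by
        rw [hinv]; simp only [Matrix.mul_assoc]
    _ = X := by rw [hDX, hXD, mul_nonsing_inv _ hX, Matrix.one_mul]

end Matrix

/-- Attainment part of Corollary 2: the MMSE combining matrix `V = A⁻¹ B` makes
`Σ = Vᴴ A V − D Dᴴ` positive definite and attains
`Dᴴ Σ⁻¹ D = Bᴴ (A − B Bᴴ)⁻¹ B`, hence the maximal determinant value. -/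
theorem stmt1 {m n : ℕ} (A : Matrix (Fin m) (Fin m) ℂ) (B : Matrix (Fin m) (Fin n) ℂ)
    (hA : A.PosDef) (hB : Function.Injective B.mulVec)
    (hM : (A - B * Bᴴ).PosDef)
    (V : Matrix (Fin m) (Fin n) ℂ) (hV : V = A⁻¹ * B)
    (D : Matrix (Fin n) (Fin n) ℂ) (hD : D = Vᴴ * B)
    (S : Matrix (Fin n) (Fin n) ℂ) (hS : S = Vᴴ * A * V - D * Dᴴ) :
    S.PosDef ∧ Dᴴ * S⁻¹ * D = Bᴴ * (A - B * Bᴴ)⁻¹ * B ∧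
    (1 + Dᴴ * S⁻¹ * D).det = (1 + Bᴴ * (A - B * Bᴴ)⁻¹ * B).det := by
  set M := A - B * Bᴴ
  have hAu : IsUnit A.det := (isUnit_iff_isUnit_det A).mp hA.isUnit
  have hMu : IsUnit M.det := (isUnit_iff_isUnit_det M).mp hM.isUnit
  have hVH : Vᴴ = Bᴴ * A⁻¹ := by rw [hV, conjTranspose_mul, hA.1.inv.eq]
  have hD' : D = Bᴴ * A⁻¹ * B := by rw [hD, hVH]
  have hDH : Dᴴ = D := hD' ▸ (isHermitian_conjTranspose_mul_mul B hA.1.inv).eq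
  have hS_conj : S = Vᴴ * M * V := by
    rw [hS, hD, conjTranspose_mul, conjTranspose_conjTranspose]
    simp only [M, Matrix.mul_sub, Matrix.sub_mul, Matrix.mul_assoc]
  have hS_sub : S = D - D * D := by
    rw [hS, hDH, hVH, hV, Matrix.mul_assoc _ A, mul_nonsing_inv_cancel_left _ _ hAu, ← hD']
  have hV_inj : Function.Injective V.mulVec := by
    have hV_mulVec : V.mulVec = A⁻¹.mulVec ∘ B.mulVec := funext fun x => by simp [hV, mulVec_mulVec]
    exact hV_mulVec ▸ (mulVec_injective_iff_isUnit.mpr hA.inv.isUnit).comp hB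
  have hX : IsUnit (Bᴴ * M⁻¹ * B).det :=
    (isUnit_iff_isUnit_det _).mp (hM.inv.conjTranspose_mul_mul_same hB).isUnit
  have hAM : A = M + B * Bᴴ := (sub_add_cancel A _).symm
  have hmain : Dᴴ * S⁻¹ * D = Bᴴ * M⁻¹ * B := by
    rw [hDH, hS_sub, hD']
    exact mul_inv_sub_mul_self_mul hX (mul_inv_mul_mul_one_add_mul_inv_mul B Bᴴ hAu hMu hAM)
      (one_add_mul_inv_mul_mul_mul_inv_mul B Bᴴ hAu hMu hAM)
  exact ⟨hS_conj ▸ hM.conjTranspose_mul_mul_same hV_inj, hmain, by rw [hmain]⟩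
end

section
/- Let T be an M×M Hermitian complex matrix and G an M×N complex matrix such that T − G G^H is positive definite. Then: (i) for every N×M complex matrix A such that Σ := A T A^H − (A G)(A G)^H is positive definite, det(I_N + (A G)^H Σ^{−1} (A G)) ≤ det(I_N + G^H (T − G G^H)^{−1} G); and (ii) if moreover T is positive definite and G has full column rank, then A := (T^{−1} G)^H attains equality, i.e., with D := A G and Σ := A T A^H − D D^H one has Σ positive definite and D^H Σ^{−1} D = G^H (T − G G^H)^{−1} G. (This is Corollary 4: the LSFD coefficient matrix A_k = (T^{−1} G)^H maximizes the large-scale-fading-decoding spectral-efficiency determinant.) -/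
/-!
Put `M := T - G Gᴴ ≻ 0`. The noise covariance is `Σ = A M Aᴴ`, and the matrix Cauchy–Schwarz
identity `Gᴴ M⁻¹ G - (A G)ᴴ Σ⁻¹ (A G) = Kᴴ M K` with `K = M⁻¹ G - Aᴴ Σ⁻¹ A G` shows that the
effective SNR matrix `(A G)ᴴ Σ⁻¹ (A G)` is dominated by `Gᴴ M⁻¹ G` in the Loewner order; the
determinant of `1 + X` is monotone in `X ⪰ 0`. Equality holds as soon as `Aᴴ = M⁻¹ G C` with `C`
invertible, and `A = (T⁻¹ G)ᴴ` is of this form with `C = 1 - Gᴴ T⁻¹ G`, because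
`M T⁻¹ G = G (1 - Gᴴ T⁻¹ G)`.
-/

open Matrix
open scoped ComplexOrder

namespace Matrix

theorem mulVec_mul_eq_comp {l m n α : Type*} [Fintype m] [Fintype n] [NonUnitalSemiring α]
    (X : Matrix l m α) (Y : Matrix m n α) : (X * Y).mulVec = X.mulVec ∘ Y.mulVec :=
  funext fun v => (mulVec_mulVec v X Y).symm

theorem mul_mul_conjTranspose_sub_mul_conjTranspose {m n α : Type*} [Fintype m] [Fintype n]
    [Ring α] [StarRing α] (A : Matrix n m α) (T : Matrix m m α) (G : Matrix m n α) :
    A * T * Aᴴ - (A * G) * (A * G)ᴴ = A * (T - G * Gᴴ) * Aᴴ := by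
  simp only [conjTranspose_mul, Matrix.mul_sub, Matrix.sub_mul, Matrix.mul_assoc]

variable {m n k 𝕜 : Type*} [Fintype m] [Fintype n] [Fintype k] [DecidableEq m] [DecidableEq n]
  [RCLike 𝕜]

open scoped MatrixOrder in
theorem PosSemidef.exists_eq_conjTranspose_mul_self {E : Matrix n n 𝕜} (hE : E.PosSemidef) :
    ∃ B : Matrix n n 𝕜, E = Bᴴ * B :=
  ⟨CFC.sqrt E, by
    rw [(CFC.sqrt_nonneg E).posSemidef.isHermitian.eq, CFC.sqrt_mul_sqrt_self E hE.nonneg]⟩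

theorem PosSemidef.one_le_eigenvalues_one_add {F : Matrix n n 𝕜} (hF : F.PosSemidef)
    (h : (1 + F).IsHermitian) (i : n) : 1 ≤ h.eigenvalues i := by
  have hv : star ⇑(h.eigenvectorBasis i) ⬝ᵥ ⇑(h.eigenvectorBasis i) = 1 := by
    rw [dotProduct_comm, ← EuclideanSpace.inner_eq_star_dotProduct, inner_self_eq_norm_sq_to_K,
      h.eigenvectorBasis.orthonormal.1 i]
    simp
  rw [h.eigenvalues_eq, add_mulVec, one_mulVec, dotProduct_add, map_add, hv, RCLike.one_re]
  linarith [hF.re_dotProduct_nonneg (h.eigenvectorBasis i)]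

theorem PosSemidef.one_le_det_one_add_s2 {F : Matrix n n 𝕜} (hF : F.PosSemidef) :
    1 ≤ (1 + F).det := by
  have h : (1 + F).IsHermitian := isHermitian_one.add hF.isHermitian
  rw [h.det_eq_prod_eigenvalues, ← RCLike.ofReal_prod, ← RCLike.ofReal_one,
    RCLike.ofReal_le_ofReal]
  exact Finset.one_le_prod fun i _ => hF.one_le_eigenvalues_one_add h i

theorem PosDef.det_le_det_add {A E : Matrix n n 𝕜} (hA : A.PosDef) (hE : E.PosSemidef) :
    A.det ≤ (A + E).det := by
  obtain ⟨B, rfl⟩ := hE.exists_eq_conjTranspose_mul_self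
  rw [det_add_mul _ _ ((isUnit_iff_isUnit_det A).mp hA.isUnit)]
  calc A.det = A.det * 1 := (mul_one _).symm
    _ ≤ A.det * (1 + B * A⁻¹ * Bᴴ).det :=
      mul_le_mul_of_nonneg_left
        (hA.inv.posSemidef.mul_mul_conjTranspose_same B).one_le_det_one_add_s2 hA.det_pos.le

theorem det_one_add_le_det_one_add {X Y : Matrix n n 𝕜} (hX : X.PosSemidef)
    (hXY : (Y - X).PosSemidef) : (1 + X).det ≤ (1 + Y).det := by
  simpa [add_assoc] using (PosDef.one.add_posSemidef hX).det_le_det_add hXY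

theorem PosDef.posSemidef_conjTranspose_mul_inv_mul_sub {M : Matrix m m 𝕜} (hM : M.PosDef)
    (A : Matrix n m 𝕜) (G : Matrix m k 𝕜) (hS : IsUnit (A * M * Aᴴ).det) :
    (Gᴴ * M⁻¹ * G - (A * G)ᴴ * (A * M * Aᴴ)⁻¹ * (A * G)).PosSemidef := by
  set S := A * M * Aᴴ with hSdef
  have hSH : S⁻¹ᴴ = S⁻¹ := (isHermitian_mul_mul_conjTranspose A hM.isHermitian).inv.eq
  have hMd : IsUnit M.det := (isUnit_iff_isUnit_det M).mp hM.isUnit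
  have hS_cancel : ∀ X : Matrix n k 𝕜, S⁻¹ * (A * (M * (Aᴴ * X))) = X := fun X => by
    rw [show A * (M * (Aᴴ * X)) = S * X by simp only [hSdef, Matrix.mul_assoc],
      nonsing_inv_mul_cancel_left _ _ hS]
  set K := M⁻¹ * G - Aᴴ * S⁻¹ * (A * G)
  have hK : Kᴴ * M * K = Gᴴ * M⁻¹ * G - (A * G)ᴴ * S⁻¹ * (A * G) := by
    simp only [K, conjTranspose_sub, conjTranspose_mul, hSH, hM.isHermitian.inv.eq,
      conjTranspose_conjTranspose, Matrix.mul_sub, Matrix.sub_mul, Matrix.mul_assoc,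
      nonsing_inv_mul_cancel_left _ _ hMd, mul_nonsing_inv_cancel_left _ _ hMd, hS_cancel]
    abel
  rw [← hK]
  exact hM.posSemidef.conjTranspose_mul_mul_same K

theorem conjTranspose_mul_inv_mul_eq_of_conjTranspose_eq {M : Matrix m m 𝕜}
    (hM : M.IsHermitian) (hMd : IsUnit M.det) {A : Matrix n m 𝕜} {G : Matrix m n 𝕜}
    {C : Matrix n n 𝕜} (hA : Aᴴ = M⁻¹ * G * C) (hW : IsUnit (Gᴴ * M⁻¹ * G).det)
    (hC : IsUnit C.det) :
    (A * G)ᴴ * (A * M * Aᴴ)⁻¹ * (A * G) = Gᴴ * M⁻¹ * G := by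
  set W := Gᴴ * M⁻¹ * G with hWdef
  have hWH : Wᴴ = W := by
    simp only [hWdef, conjTranspose_mul, conjTranspose_conjTranspose, hM.inv.eq,
      Matrix.mul_assoc]
  have hA' : A = Cᴴ * Gᴴ * M⁻¹ := by
    rw [← conjTranspose_conjTranspose A, hA]
    simp only [conjTranspose_mul, hM.inv.eq, Matrix.mul_assoc]
  have hAG : A * G = Cᴴ * W := by simp only [hA', hWdef, Matrix.mul_assoc]
  have hS : A * M * Aᴴ = Cᴴ * W * C := by
    rw [hA, hA']
    simp only [hWdef, Matrix.mul_assoc, nonsing_inv_mul_cancel_left _ _ hMd]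
  have hCH : IsUnit Cᴴ.det := by rwa [det_conjTranspose, isUnit_star]
  rw [hAG, hS, Matrix.mul_inv_rev, Matrix.mul_inv_rev, conjTranspose_mul, hWH]
  simp only [conjTranspose_conjTranspose, Matrix.mul_assoc, nonsing_inv_mul_cancel_left _ _ hCH,
    nonsing_inv_mul _ hW, Matrix.mul_one, mul_nonsing_inv _ hC]

theorem inv_mul_eq_inv_sub_mul_mul {T : Matrix m m 𝕜} (hT : IsUnit T.det) (G : Matrix m n 𝕜)
    (hM : IsUnit (T - G * Gᴴ).det) :
    T⁻¹ * G = (T - G * Gᴴ)⁻¹ * G * (1 - Gᴴ * T⁻¹ * G) := by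
  have h : (T - G * Gᴴ) * (T⁻¹ * G) = G * (1 - Gᴴ * T⁻¹ * G) := by
    simp only [Matrix.sub_mul, Matrix.mul_sub, Matrix.mul_one, Matrix.mul_assoc,
      mul_nonsing_inv_cancel_left _ _ hT]
  rw [Matrix.mul_assoc, ← h, nonsing_inv_mul_cancel_left _ _ hM]

end Matrix

theorem stmt2_general {M N : ℕ} (T : Matrix (Fin M) (Fin M) ℂ) (G : Matrix (Fin M) (Fin N) ℂ)
    (hM : (T - G * Gᴴ).PosDef) :
    (∀ A : Matrix (Fin N) (Fin M) ℂ,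
      (A * T * Aᴴ - (A * G) * (A * G)ᴴ).PosDef →
      (1 + (A * G)ᴴ * (A * T * Aᴴ - (A * G) * (A * G)ᴴ)⁻¹ * (A * G)).det ≤
        (1 + Gᴴ * (T - G * Gᴴ)⁻¹ * G).det) ∧
    (T.PosDef → Function.Injective G.mulVec →
      ∀ (A : Matrix (Fin N) (Fin M) ℂ) (D S : Matrix (Fin N) (Fin N) ℂ),
        A = (T⁻¹ * G)ᴴ → D = A * G → S = A * T * Aᴴ - D * Dᴴ →
        S.PosDef ∧ Dᴴ * S⁻¹ * D = Gᴴ * (T - G * Gᴴ)⁻¹ * G) := by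
  have hMd : IsUnit (T - G * Gᴴ).det := (isUnit_iff_isUnit_det _).mp hM.isUnit
  refine ⟨fun A hS => ?_, fun hT hG A D S hA hD hS => ?_⟩
  · rw [mul_mul_conjTranspose_sub_mul_conjTranspose] at hS ⊢
    exact det_one_add_le_det_one_add (hS.inv.posSemidef.conjTranspose_mul_mul_same _)
      (hM.posSemidef_conjTranspose_mul_inv_mul_sub A G ((isUnit_iff_isUnit_det _).mp hS.isUnit))
  · subst hA hD hS
    have hTd : IsUnit T.det := (isUnit_iff_isUnit_det T).mp hT.isUnit
    have hTG : T⁻¹ * G = (T - G * Gᴴ)⁻¹ * G * (1 - Gᴴ * T⁻¹ * G) :=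
      inv_mul_eq_inv_sub_mul_mul hTd G hMd
    have hTG_inj : Function.Injective (T⁻¹ * G).mulVec := by
      rw [mulVec_mul_eq_comp]
      exact (mulVec_injective_iff_isUnit.mpr hT.inv.isUnit).comp hG
    have hC : IsUnit (1 - Gᴴ * T⁻¹ * G).det := by
      rw [hTG, mulVec_mul_eq_comp] at hTG_inj
      exact (isUnit_iff_isUnit_det _).mp (mulVec_injective_iff_isUnit.mp hTG_inj.of_comp)
    have hW : IsUnit (Gᴴ * (T - G * Gᴴ)⁻¹ * G).det :=
      (isUnit_iff_isUnit_det _).mp (hM.inv.conjTranspose_mul_mul_same hG).isUnit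
    rw [mul_mul_conjTranspose_sub_mul_conjTranspose]
    refine ⟨?_, conjTranspose_mul_inv_mul_eq_of_conjTranspose_eq hM.isHermitian hMd
      (by rw [conjTranspose_conjTranspose, hTG]) hW hC⟩
    rw [conjTranspose_conjTranspose]
    exact hM.conjTranspose_mul_mul_same hTG_inj

/-- Corollary 4: (i) no LSFD coefficient matrix `A` yields a larger
spectral-efficiency determinant than `det(I_N + Gᴴ (T − G Gᴴ)⁻¹ G)`, and
(ii) the choice `A = (T⁻¹ G)ᴴ` attains this value. -/
theorem stmt2 {M N : ℕ} (T : Matrix (Fin M) (Fin M) ℂ) (G : Matrix (Fin M) (Fin N) ℂ)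
    (hT : T.IsHermitian) (hM : (T - G * Gᴴ).PosDef) :
    (∀ A : Matrix (Fin N) (Fin M) ℂ,
      (A * T * Aᴴ - (A * G) * (A * G)ᴴ).PosDef →
      (1 + (A * G)ᴴ * (A * T * Aᴴ - (A * G) * (A * G)ᴴ)⁻¹ * (A * G)).det ≤
        (1 + Gᴴ * (T - G * Gᴴ)⁻¹ * G).det) ∧
    (T.PosDef → Function.Injective G.mulVec →
      ∀ (A : Matrix (Fin N) (Fin M) ℂ) (D S : Matrix (Fin N) (Fin N) ℂ),
        A = (T⁻¹ * G)ᴴ → D = A * G → S = A * T * Aᴴ - D * Dᴴ →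
        S.PosDef ∧ Dᴴ * S⁻¹ * D = Gᴴ * (T - G * Gᴴ)⁻¹ * G) :=
  stmt2_general T G hM
end

section
/- Let C be an m×m Hermitian positive definite complex matrix and V an m×n complex matrix such that V^H C V is invertible. Then C^{−1} − V (V^H C V)^{−1} V^H is positive semidefinite; equivalently, for every m×n complex matrix B, the matrix B^H C^{−1} B − (V^H B)^H (V^H C V)^{−1} (V^H B) is positive semidefinite. (Key matrix Cauchy–Schwarz-type inequality underlying the optimality of MMSE combining and of the LSFD coefficient matrix.) -/
open Matrix
open scoped ComplexOrder

/-!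
Put `D = C⁻¹ - V (Vᴴ C V)⁻¹ Vᴴ`. Expanding, `D C D = D`, and `D` is Hermitian, so
`D = Dᴴ C D ⪰ 0` because `C ⪰ 0`; the second claim is `Bᴴ D B ⪰ 0`.
The identity `D C D = D` comes from `C⁻¹ C = 1` and `M⁻¹ M M⁻¹ = M⁻¹` for `M = Vᴴ C V`.
-/

namespace Matrix

variable {m n R : Type*} [Fintype m] [DecidableEq m] [Fintype n] [DecidableEq n]
  [CommRing R]

theorem nonsing_inv_mul_mul_nonsing_inv (A : Matrix n n R) :
    A⁻¹ * A * A⁻¹ = A⁻¹ := by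
  by_cases hA : IsUnit A.det
  · rw [nonsing_inv_mul A hA, one_mul]
  · rw [nonsing_inv_apply_not_isUnit A hA, mul_zero]

variable [StarRing R]

theorem inv_sub_mul_inv_mul_conjTranspose_mul_mul_self {C : Matrix m m R} (hC : IsUnit C)
    (V : Matrix m n R) :
    (C⁻¹ - V * (Vᴴ * C * V)⁻¹ * Vᴴ) * C * (C⁻¹ - V * (Vᴴ * C * V)⁻¹ * Vᴴ) =
      C⁻¹ - V * (Vᴴ * C * V)⁻¹ * Vᴴ := by
  have hCdet : IsUnit C.det := (isUnit_iff_isUnit_det C).1 hC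
  calc _ = C⁻¹ * C * C⁻¹ - C⁻¹ * C * (V * (Vᴴ * C * V)⁻¹ * Vᴴ)
        - V * (Vᴴ * C * V)⁻¹ * Vᴴ * (C * C⁻¹)
        + V * ((Vᴴ * C * V)⁻¹ * (Vᴴ * C * V) * (Vᴴ * C * V)⁻¹) * Vᴴ := by
        simp only [sub_mul, mul_sub, Matrix.mul_assoc]; abel
    _ = _ := by
        rw [nonsing_inv_mul C hCdet, mul_nonsing_inv C hCdet,
          nonsing_inv_mul_mul_nonsing_inv]
        simp only [one_mul, mul_one]; abel

theorem IsHermitian.inv_sub_mul_inv_mul_conjTranspose {C : Matrix m m R} (hC : C.IsHermitian)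
    (V : Matrix m n R) : (C⁻¹ - V * (Vᴴ * C * V)⁻¹ * Vᴴ).IsHermitian := by
  have hM : (Vᴴ * C * V)⁻¹.IsHermitian := (isHermitian_conjTranspose_mul_mul V hC).inv
  exact hC.inv.sub (isHermitian_mul_mul_conjTranspose V hM)

theorem PosDef.posSemidef_inv_sub_mul_inv_mul_conjTranspose {K : Type*} [Field K]
    [PartialOrder K] [StarRing K] [StarOrderedRing K] {C : Matrix m m K} (hC : C.PosDef)
    (V : Matrix m n K) : (C⁻¹ - V * (Vᴴ * C * V)⁻¹ * Vᴴ).PosSemidef := by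
  have h := hC.posSemidef.conjTranspose_mul_mul_same (C⁻¹ - V * (Vᴴ * C * V)⁻¹ * Vᴴ)
  rwa [(hC.isHermitian.inv_sub_mul_inv_mul_conjTranspose V).eq,
    inv_sub_mul_inv_mul_conjTranspose_mul_mul_self hC.isUnit] at h

end Matrix

theorem stmt5_general {m n : ℕ} (C : Matrix (Fin m) (Fin m) ℂ) (V : Matrix (Fin m) (Fin n) ℂ)
    (hC : C.PosDef) :
    (C⁻¹ - V * (Vᴴ * C * V)⁻¹ * Vᴴ).PosSemidef ∧
    ∀ B : Matrix (Fin m) (Fin n) ℂ,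
      (Bᴴ * C⁻¹ * B - (Vᴴ * B)ᴴ * (Vᴴ * C * V)⁻¹ * (Vᴴ * B)).PosSemidef := by
  have hD := hC.posSemidef_inv_sub_mul_inv_mul_conjTranspose V
  refine ⟨hD, fun B => ?_⟩
  have hBDB : Bᴴ * C⁻¹ * B - (Vᴴ * B)ᴴ * (Vᴴ * C * V)⁻¹ * (Vᴴ * B) =
      Bᴴ * (C⁻¹ - V * (Vᴴ * C * V)⁻¹ * Vᴴ) * B := by
    simp only [conjTranspose_mul, conjTranspose_conjTranspose, Matrix.mul_sub, Matrix.sub_mul,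
      Matrix.mul_assoc]
  rw [hBDB]
  exact hD.conjTranspose_mul_mul_same B

/-- Key matrix Cauchy–Schwarz-type inequality: for `C ≻ 0` and `V` with `Vᴴ C V`
invertible, `C⁻¹ − V (Vᴴ C V)⁻¹ Vᴴ ⪰ 0`; equivalently, for every `B`,
`Bᴴ C⁻¹ B − (Vᴴ B)ᴴ (Vᴴ C V)⁻¹ (Vᴴ B) ⪰ 0`. -/
theorem stmt5 {m n : ℕ} (C : Matrix (Fin m) (Fin m) ℂ) (V : Matrix (Fin m) (Fin n) ℂ)
    (hC : C.PosDef) (hV : IsUnit (Vᴴ * C * V)) :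
    (C⁻¹ - V * (Vᴴ * C * V)⁻¹ * Vᴴ).PosSemidef ∧
    ∀ B : Matrix (Fin m) (Fin n) ℂ,
      (Bᴴ * C⁻¹ * B - (Vᴴ * B)ᴴ * (Vᴴ * C * V)⁻¹ * (Vᴴ * B)).PosSemidef :=
  stmt5_general C V hC
end

section
/- Let U_r be an L×L unitary complex matrix, U_t an N×N unitary complex matrix, and W̃ a deterministic L×N real (entrywise) matrix. Let X be a random L×N complex matrix whose LN entries X_{ij} are mutually independent, each with mean 0 and E{|X_{ij}|²} = 1 (and all entries integrable with integrable squared modulus). Define the random matrix H̃ := U_r (W̃ ⊙ X) U_t^H, where ⊙ is the entrywise (Hadamard) product. Then the full correlation matrix R := E{vec(H̃) vec(H̃)^H} ∈ ℂ^{LN×LN} satisfies R = (conj(U_t) ⊗ U_r) · Diag(vec(W)) · (conj(U_t) ⊗ U_r)^H, where W := W̃ ⊙ W̃, Diag(v) is the diagonal matrix with the vector v on its diagonal, conj denotes entrywise complex conjugation, and ⊗ is the Kronecker product. (Structure of the full correlation matrix of the NLoS component of the Weichselberger channel model.) -/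
/-!
Vectorising turns the channel into a linear image of the vectorised noise:
`vec H̃ = (conj U_t ⊗ U_r) Diag(vec W̃) vec X`. The correlation matrix of `A x` is `A R_x Aᴴ`, and
independence, zero means and unit second moments make `R_x` the identity, so
`R = (conj U_t ⊗ U_r) Diag(vec W̃) Diag(vec W̃)ᴴ (conj U_t ⊗ U_r)ᴴ`.
-/

open Matrix MeasureTheory ProbabilityTheory
open scoped Kronecker

/-- Column-stacking vectorization of an `L × N` matrix: the entry of `vec M`
at index `(j, i)` (column `j`, row `i`) is `M i j`. -/
def vecc {α : Type*} {L N : ℕ} (M : Matrix (Fin L) (Fin N) α) : Fin N × Fin L → α :=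
  fun p => M p.2 p.1

open ComplexConjugate

namespace Matrix

theorem vec_mul_hadamard_mul_conjTranspose {R l m n p : Type*} [CommSemiring R]
    [StarRing R] [Fintype m] [Fintype n] [DecidableEq m] [DecidableEq n]
    (A : Matrix l m R) (W X : Matrix m n R) (B : Matrix p n R) :
    vec (A * (W ⊙ X) * Bᴴ) = (B.map star ⊗ₖ A * diagonal (vec W)) *ᵥ vec X := by
  calc vec (A * (W ⊙ X) * Bᴴ) = (B.map star ⊗ₖ A) *ᵥ vec (W ⊙ X) :=
        (kronecker_mulVec_vec A (W ⊙ X) (B.map star)).symm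
    _ = _ := by
      rw [← mulVec_mulVec]
      congr 1
      ext
      simp only [mulVec_diagonal, vec_hadamard, Pi.mul_apply]

variable {Ω ι κ 𝕜 : Type*} [MeasurableSpace Ω] [RCLike 𝕜]

noncomputable def correlationMatrix (μ : Measure Ω) (x : Ω → κ → 𝕜) : Matrix κ κ 𝕜 :=
  of fun r s => ∫ ω, x ω r * conj (x ω s) ∂μ

theorem correlationMatrix_mulVec [Fintype κ] {μ : Measure Ω} (A : Matrix ι κ 𝕜)
    {x : Ω → κ → 𝕜} (hx : ∀ r s, Integrable (fun ω => x ω r * conj (x ω s)) μ) :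
    correlationMatrix μ (fun ω => A *ᵥ x ω) = A * correlationMatrix μ x * Aᴴ := by
  ext p q
  have expand : ∀ ω, (A *ᵥ x ω) p * conj ((A *ᵥ x ω) q)
      = ∑ s, ∑ r, A p r * conj (A q s) * (x ω r * conj (x ω s)) := fun ω => by
    simp only [mulVec, dotProduct, map_sum, map_mul, Finset.sum_mul_sum]
    rw [Finset.sum_comm]
    exact Finset.sum_congr rfl fun _ _ => Finset.sum_congr rfl fun _ _ => by ring
  simp only [correlationMatrix, of_apply, expand, mul_apply, conjTranspose_apply,
    RCLike.star_def, Finset.sum_mul]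
  rw [integral_finsetSum _ fun s _ => integrable_finsetSum _ fun r _ => (hx r s).const_mul _]
  refine Finset.sum_congr rfl fun s _ => ?_
  rw [integral_finsetSum _ fun r _ => (hx r s).const_mul _]
  refine Finset.sum_congr rfl fun r _ => ?_
  rw [integral_const_mul]
  ring

end Matrix

section Independent

variable {Ω κ 𝕜 : Type*} [MeasurableSpace Ω] [RCLike 𝕜] {μ : Measure Ω} {x : Ω → κ → 𝕜}

theorem MeasureTheory.Integrable.conj {g : Ω → 𝕜} (hg : Integrable g μ) :
    Integrable (fun ω => conj (g ω)) μ :=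
  RCLike.conjCLE.toContinuousLinearMap.integrable_comp hg

theorem ProbabilityTheory.IndepFun.conj_right {β : Type*} [MeasurableSpace β] {f : Ω → β}
    {g : Ω → 𝕜} (h : IndepFun f g μ) : IndepFun f (fun ω => conj (g ω)) μ :=
  h.comp measurable_id RCLike.continuous_conj.measurable

theorem integrable_mul_conj_of_pairwise_indepFun
    (hindep : Pairwise fun r s => IndepFun (fun ω => x ω r) (fun ω => x ω s) μ)
    (hint : ∀ r, Integrable (fun ω => x ω r) μ)
    (hint2 : ∀ r, Integrable (fun ω => ‖x ω r‖ ^ 2) μ) (r s : κ) :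
    Integrable (fun ω => x ω r * conj (x ω s)) μ := by
  obtain rfl | hrs := eq_or_ne r s
  · simpa only [RCLike.mul_conj, RCLike.ofReal_pow] using (hint2 r).ofReal (𝕜 := 𝕜)
  · exact (hindep hrs).conj_right.integrable_mul (hint r) (hint s).conj

theorem correlationMatrix_eq_one_of_pairwise_indepFun [DecidableEq κ]
    (hindep : Pairwise fun r s => IndepFun (fun ω => x ω r) (fun ω => x ω s) μ)
    (hint : ∀ r, Integrable (fun ω => x ω r) μ)
    (hmean : ∀ r, ∫ ω, x ω r ∂μ = 0) (hvar : ∀ r, ∫ ω, ‖x ω r‖ ^ 2 ∂μ = 1) :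
    correlationMatrix μ x = 1 := by
  ext r s
  obtain rfl | hrs := eq_or_ne r s
  · simp only [correlationMatrix, of_apply, RCLike.mul_conj, one_apply_eq]
    exact_mod_cast (integral_ofReal (𝕜 := 𝕜)).trans (congrArg _ (hvar r))
  · rw [correlationMatrix, of_apply, one_apply_ne hrs,
      (hindep hrs).conj_right.integral_fun_mul_eq_mul_integral (hint r).1 (hint s).conj.1]
    simp [hmean]

end Independent

theorem stmt10_general {L N : ℕ} {Ω : Type*} [MeasurableSpace Ω] (μ : Measure Ω)
    (Ur : Matrix (Fin L) (Fin L) ℂ) (Ut : Matrix (Fin N) (Fin N) ℂ)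
    (Wt : Matrix (Fin L) (Fin N) ℝ)
    (X : Ω → Matrix (Fin L) (Fin N) ℂ)
    (hindep : iIndepFun
      (fun (p : Fin L × Fin N) ω => X ω p.1 p.2) μ)
    (hint : ∀ i j, Integrable (fun ω => X ω i j) μ)
    (hint2 : ∀ i j, Integrable (fun ω => ‖X ω i j‖ ^ 2) μ)
    (hmean : ∀ i j, ∫ ω, X ω i j ∂μ = 0)
    (hvar : ∀ i j, ∫ ω, ‖X ω i j‖ ^ 2 ∂μ = 1) :
    Matrix.of (fun p q : Fin N × Fin L =>
        ∫ ω, vecc (Ur * ((Wt.map Complex.ofReal).hadamard (X ω)) * Utᴴ) p *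
          (starRingEnd ℂ) (vecc (Ur * ((Wt.map Complex.ofReal).hadamard (X ω)) * Utᴴ) q) ∂μ)
      = ((Ut.map (starRingEnd ℂ)) ⊗ₖ Ur) *
          Matrix.diagonal (vecc ((Wt.hadamard Wt).map Complex.ofReal)) *
          ((Ut.map (starRingEnd ℂ)) ⊗ₖ Ur)ᴴ := by
  have hpair : Pairwise fun r s : Fin N × Fin L =>
      IndepFun (fun ω => vec (X ω) r) (fun ω => vec (X ω) s) μ :=
    fun _ _ hrs => hindep.indepFun (Prod.swap_injective.ne hrs)
  have hcorr : correlationMatrix μ (fun ω => vec (X ω)) = 1 :=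
    correlationMatrix_eq_one_of_pairwise_indepFun hpair (fun _ => hint _ _) (fun _ => hmean _ _)
      (fun _ => hvar _ _)
  have hD : diagonal (vec (Wt.map Complex.ofReal)) * (diagonal (vec (Wt.map Complex.ofReal)))ᴴ
      = diagonal (vecc ((Wt.hadamard Wt).map Complex.ofReal)) := by
    rw [diagonal_conjTranspose, diagonal_mul_diagonal]
    congr 1
    ext
    simp [vecc, vec]
  change correlationMatrix μ (fun ω => vec (Ur * (Wt.map Complex.ofReal ⊙ X ω) * Utᴴ)) = _
  simp only [vec_mul_hadamard_mul_conjTranspose]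
  rw [correlationMatrix_mulVec _ (integrable_mul_conj_of_pairwise_indepFun hpair
      (fun _ => hint _ _) (fun _ => hint2 _ _)), hcorr, mul_one, conjTranspose_mul, mul_assoc,
    ← mul_assoc (diagonal _), hD, ← mul_assoc]
  rfl

/-- Structure of the full correlation matrix of the NLoS component of the
Weichselberger channel model: for `H̃ = U_r (W̃ ⊙ X) U_tᴴ` with independent,
zero-mean, unit-second-moment entries `X_{ij}`, one has
`E{vec(H̃) vec(H̃)ᴴ} = (conj U_t ⊗ U_r) Diag(vec(W̃ ⊙ W̃)) (conj U_t ⊗ U_r)ᴴ`. -/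
theorem stmt10 {L N : ℕ} {Ω : Type*} [MeasurableSpace Ω] (μ : Measure Ω)
    [IsProbabilityMeasure μ]
    (Ur : Matrix (Fin L) (Fin L) ℂ) (Ut : Matrix (Fin N) (Fin N) ℂ)
    (hUr : Ur ∈ Matrix.unitaryGroup (Fin L) ℂ)
    (hUt : Ut ∈ Matrix.unitaryGroup (Fin N) ℂ)
    (Wt : Matrix (Fin L) (Fin N) ℝ)
    (X : Ω → Matrix (Fin L) (Fin N) ℂ)
    (hindep : iIndepFun
      (fun (p : Fin L × Fin N) ω => X ω p.1 p.2) μ)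
    (hint : ∀ i j, Integrable (fun ω => X ω i j) μ)
    (hint2 : ∀ i j, Integrable (fun ω => ‖X ω i j‖ ^ 2) μ)
    (hmean : ∀ i j, ∫ ω, X ω i j ∂μ = 0)
    (hvar : ∀ i j, ∫ ω, ‖X ω i j‖ ^ 2 ∂μ = 1) :
    Matrix.of (fun p q : Fin N × Fin L =>
        ∫ ω, vecc (Ur * ((Wt.map Complex.ofReal).hadamard (X ω)) * Utᴴ) p *
          (starRingEnd ℂ) (vecc (Ur * ((Wt.map Complex.ofReal).hadamard (X ω)) * Utᴴ) q) ∂μ)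
      = ((Ut.map (starRingEnd ℂ)) ⊗ₖ Ur) *
          Matrix.diagonal (vecc ((Wt.hadamard Wt).map Complex.ofReal)) *
          ((Ut.map (starRingEnd ℂ)) ⊗ₖ Ur)ᴴ :=
  stmt10_general μ Ur Ut Wt X hindep hint hint2 hmean hvar
end
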